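/- arXiv:1004.2027 — 2 statements merged into one kernel-verified Lean document; each statement's English description precedes it below -/
import Mathlib

section
/- Consider the exact DPP iteration with parameter η > 0 started from an action preference function Ψ_0 with ‖Ψ_0‖ ≤ V_max, and let π_k be the policy induced by DPP at round k. Then for every state-action pair (x,a), lim_{k→∞} Q^{π_k}(x,a) = Q*(x,a). -/
/-!
With `S_k = Σ_{j ≤ k} π_j Ψ_j`, the DPP update telescopes to
`Ψ_{k+1} + S_k = Ψ_0 + (k+1) r + γ P S_k`. The soft-max is unchanged by adding a function of the
state, so `π_{k+1}` is the soft-max of `G_k = Ψ_{k+1} + S_k`, and `S_{k+1} = π_{k+1} G_k` is within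
`|A|/η` of `max_a G_k`. Comparing with `(k+1) Q* = (k+1) r + γ P ((k+1) V*)`, where
`V* = max_a Q*`, gives `‖S_{k+1} - (k+2) V*‖ ≤ γ ‖S_k - (k+1) V*‖ + const`, so this error stays
bounded. Hence `G_k = (k+1) Q* + O(1)`, the policy `π_{k+1}` is `O(1/k)`-greedy for `Q*`, and the
policy-evaluation bound `‖Q^π - Q*‖ ≤ γ δ / (1 - γ)` for `δ`-greedy `π` gives
`‖Q^{π_{k+1}} - Q*‖ = O(1/k)`.
-/

open Finset Real Filter

variable {X A : Type*}

/-- `(πQ)(x) = Σ_a π(a|x) Q(x,a)`. -/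
noncomputable def polApply [Fintype A] (pol : X → A → ℝ) (Q : X → A → ℝ) : X → ℝ :=
  fun x => ∑ a, pol x a * Q x a

/-- Bellman operator `T^π`. -/
noncomputable def bellman [Fintype X] [Fintype A]
    (P : X → A → X → ℝ) (r : X → A → ℝ) (γ : ℝ) (pol : X → A → ℝ)
    (Q : X → A → ℝ) : X → A → ℝ :=
  fun x a => r x a + γ * ∑ x', ∑ a', P x a x' * pol x' a' * Q x' a'

/-- Bellman optimality operator `T`. -/
noncomputable def bellmanOpt [Fintype X] [Fintype A] [Nonempty A]
    (P : X → A → X → ℝ) (r : X → A → ℝ) (γ : ℝ) (Q : X → A → ℝ) : X → A → ℝ :=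
  fun x a => r x a + γ * ∑ x', P x a x' * (Finset.univ.sup' Finset.univ_nonempty (Q x'))

/-- Soft-max policy associated with action preferences `Ψ` at inverse temperature `η`. -/
noncomputable def softmaxPol [Fintype A] (η : ℝ) (Ψ : X → A → ℝ) : X → A → ℝ :=
  fun x a => Real.exp (η * Ψ x a) / ∑ a', Real.exp (η * Ψ x a')

/-- Supremum norm over state-action pairs. -/
noncomputable def supNorm [Fintype X] [Fintype A] [Nonempty X] [Nonempty A]
    (Q : X → A → ℝ) : ℝ :=
  Finset.univ.sup' Finset.univ_nonempty (fun p : X × A => |Q p.1 p.2|)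

section Simplex

variable {ι : Type*} [Fintype ι] {w : ι → ℝ}

lemma abs_apply_le_norm (f : ι → ℝ) (i : ι) : |f i| ≤ ‖f‖ :=
  norm_le_pi_norm f i

lemma abs_sum_mul_le_norm (hw : w ∈ stdSimplex ℝ ι) (f : ι → ℝ) : |∑ i, w i * f i| ≤ ‖f‖ :=
  calc |∑ i, w i * f i| ≤ ∑ i, w i * ‖f‖ := by
        refine (abs_sum_le_sum_abs _ _).trans (sum_le_sum fun i _ => ?_)
        rw [abs_mul, abs_of_nonneg (hw.1 i)]
        exact mul_le_mul_of_nonneg_left (abs_apply_le_norm f i) (hw.1 i)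
    _ = ‖f‖ := by rw [← sum_mul, hw.2, one_mul]

variable [Nonempty ι]

lemma sum_mul_le_sup' (hw : w ∈ stdSimplex ℝ ι) (f : ι → ℝ) :
    ∑ i, w i * f i ≤ univ.sup' univ_nonempty f :=
  calc ∑ i, w i * f i ≤ ∑ i, w i * univ.sup' univ_nonempty f :=
        sum_le_sum fun i _ => mul_le_mul_of_nonneg_left (le_sup' f (mem_univ i)) (hw.1 i)
    _ = univ.sup' univ_nonempty f := by rw [← sum_mul, hw.2, one_mul]

lemma sup'_le_sup'_add_norm_sub (f g : ι → ℝ) :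
    univ.sup' univ_nonempty f ≤ univ.sup' univ_nonempty g + ‖f - g‖ :=
  sup'_le _ _ fun i _ => by
    have hg := le_sup' g (mem_univ i)
    have hfg := (le_abs_self _).trans (abs_apply_le_norm (f - g) i)
    rw [Pi.sub_apply] at hfg
    linarith

lemma abs_sup'_sub_sup'_le_norm (f g : ι → ℝ) :
    |univ.sup' univ_nonempty f - univ.sup' univ_nonempty g| ≤ ‖f - g‖ := by
  rw [abs_sub_le_iff]
  constructor
  · linarith [sup'_le_sup'_add_norm_sub f g]
  · linarith [sup'_le_sup'_add_norm_sub g f, norm_sub_rev f g]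

end Simplex

lemma abs_apply_apply_le_norm [Fintype X] [Fintype A] (Q : X → A → ℝ) (x : X) (a : A) :
    |Q x a| ≤ ‖Q‖ :=
  (abs_apply_le_norm (Q x) a).trans (norm_le_pi_norm Q x)

lemma norm_le_of_abs_apply_apply_le [Fintype X] [Fintype A] {Q : X → A → ℝ} {C : ℝ}
    (hC : 0 ≤ C) (h : ∀ x a, |Q x a| ≤ C) : ‖Q‖ ≤ C :=
  (pi_norm_le_iff_of_nonneg hC).2 fun x => (pi_norm_le_iff_of_nonneg hC).2 (h x)

noncomputable def maxValue [Fintype A] [Nonempty A] (Q : X → A → ℝ) : X → ℝ :=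
  fun x => univ.sup' univ_nonempty (Q x)

section Policy

variable [Fintype A] {p : X → A → ℝ} {x : X}

lemma abs_polApply_le_norm (hp : p x ∈ stdSimplex ℝ A) (Q : X → A → ℝ) :
    |polApply p Q x| ≤ ‖Q x‖ :=
  abs_sum_mul_le_norm hp (Q x)

lemma polApply_sub (p Q Q' : X → A → ℝ) : polApply p (Q - Q') = polApply p Q - polApply p Q' := by
  ext x
  simp only [polApply, Pi.sub_apply, mul_sub, sum_sub_distrib]

lemma polApply_smul (p Q : X → A → ℝ) (c : ℝ) : polApply p (c • Q) = c • polApply p Q := by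
  ext x
  simp only [polApply, Pi.smul_apply, smul_eq_mul, mul_sum, mul_left_comm]

variable [Nonempty A]

lemma polApply_le_maxValue (hp : p x ∈ stdSimplex ℝ A) (Q : X → A → ℝ) :
    polApply p Q x ≤ maxValue Q x :=
  sum_mul_le_sup' hp (Q x)

lemma maxValue_smul {c : ℝ} (hc : 0 ≤ c) (Q : X → A → ℝ) : maxValue (c • Q) = c • maxValue Q := by
  ext x
  exact (mul₀_sup' hc (Q x) univ univ_nonempty).symm

lemma abs_maxValue_sub_le_norm (Q Q' : X → A → ℝ) (x : X) :
    |maxValue Q x - maxValue Q' x| ≤ ‖Q x - Q' x‖ :=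
  abs_sup'_sub_sup'_le_norm (Q x) (Q' x)

lemma maxValue_sub_polApply_le [Fintype X] (hp : p x ∈ stdSimplex ℝ A) (Q Q' : X → A → ℝ) :
    maxValue Q' x - polApply p Q' x ≤ maxValue Q x - polApply p Q x + 2 * ‖Q - Q'‖ := by
  have hmax := abs_maxValue_sub_le_norm Q Q' x
  have havg := abs_polApply_le_norm hp (Q - Q')
  have hx : ‖(Q - Q') x‖ ≤ ‖Q - Q'‖ := norm_le_pi_norm (Q - Q') x
  simp only [polApply_sub, Pi.sub_apply] at havg hx
  linarith [abs_le.1 hmax, abs_le.1 havg]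

end Policy

section Softmax

variable [Fintype A]

lemma softmaxPol_mem_stdSimplex [Nonempty A] (η : ℝ) (Ψ : X → A → ℝ) (x : X) :
    softmaxPol η Ψ x ∈ stdSimplex ℝ A := by
  have hZ : 0 < ∑ a, exp (η * Ψ x a) := sum_pos (fun _ _ => exp_pos _) univ_nonempty
  refine ⟨fun a => div_nonneg (exp_nonneg _) hZ.le, ?_⟩
  simp only [softmaxPol]
  rw [← sum_div, div_self hZ.ne']

lemma softmaxPol_add_right (η : ℝ) (Ψ : X → A → ℝ) (c : X → ℝ) :
    softmaxPol η (fun x a => Ψ x a + c x) = softmaxPol η Ψ := by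
  ext x a
  simp only [softmaxPol, mul_add, exp_add, ← sum_mul]
  exact mul_div_mul_right _ _ (exp_ne_zero _)

lemma maxValue_sub_le_polApply_softmaxPol [Nonempty A] {η : ℝ} (hη : 0 < η)
    (Ψ : X → A → ℝ) (x : X) :
    maxValue Ψ x - Fintype.card A / η ≤ polApply (softmaxPol η Ψ) Ψ x := by
  set m := maxValue Ψ x
  set Z := ∑ a, exp (η * Ψ x a)
  have hp := softmaxPol_mem_stdSimplex η Ψ x
  have hZ : exp (η * m) ≤ Z := by
    obtain ⟨a₀, -, ha₀⟩ := exists_mem_eq_sup' (univ_nonempty (α := A)) (Ψ x)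
    rw [show m = Ψ x a₀ from ha₀]
    exact single_le_sum (f := fun a => exp (η * Ψ x a)) (fun _ _ => (exp_pos _).le) (mem_univ a₀)
  -- with `t = m - Ψ x a`, the weight of `a` is at most `exp (-η t)`, and `η t exp (-η t) ≤ 1`
  have hterm : ∀ a, softmaxPol η Ψ x a * (m - Ψ x a) ≤ 1 / η := fun a => by
    have ht : 0 ≤ m - Ψ x a := sub_nonneg.2 (le_sup' (Ψ x) (mem_univ a))
    have hweight : softmaxPol η Ψ x a ≤ exp (-(η * (m - Ψ x a))) := by
      rw [softmaxPol, div_le_iff₀ (sum_pos (fun _ _ => exp_pos _) univ_nonempty)]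
      calc exp (η * Ψ x a) = exp (-(η * (m - Ψ x a))) * exp (η * m) := by
            rw [← exp_add]; ring_nf
        _ ≤ exp (-(η * (m - Ψ x a))) * Z := mul_le_mul_of_nonneg_left hZ (exp_nonneg _)
    calc softmaxPol η Ψ x a * (m - Ψ x a) ≤ exp (-(η * (m - Ψ x a))) * (m - Ψ x a) :=
          mul_le_mul_of_nonneg_right hweight ht
      _ = (η * (m - Ψ x a)) * exp (-(η * (m - Ψ x a))) / η := by field_simp
      _ ≤ 1 / η := by
          gcongr
          exact (mul_exp_neg_le_exp_neg_one _).trans (exp_le_one_iff.2 (by norm_num))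
  have hgap : m - polApply (softmaxPol η Ψ) Ψ x = ∑ a, softmaxPol η Ψ x a * (m - Ψ x a) := by
    simp only [polApply, mul_sub, sum_sub_distrib, ← sum_mul, hp.2, one_mul]
  have hsum : ∑ a, softmaxPol η Ψ x a * (m - Ψ x a) ≤ Fintype.card A / η := by
    calc _ ≤ ∑ _a : A, 1 / η := sum_le_sum fun a _ => hterm a
      _ = Fintype.card A / η := by rw [sum_const, card_univ, nsmul_eq_mul, mul_one_div]
  linarith

end Softmax

section Bellman

variable [Fintype X] [Fintype A] {P : X → A → X → ℝ} {r : X → A → ℝ} {γ : ℝ}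

lemma bellman_apply (p Q : X → A → ℝ) (x : X) (a : A) :
    bellman P r γ p Q x a = r x a + γ * ∑ x', P x a x' * polApply p Q x' := by
  simp only [bellman, polApply, mul_sum, mul_assoc]

lemma bellmanOpt_apply [Nonempty A] (Q : X → A → ℝ) (x : X) (a : A) :
    bellmanOpt P r γ Q x a = r x a + γ * ∑ x', P x a x' * maxValue Q x' :=
  rfl

theorem abs_sub_le_of_maxValue_sub_polApply_le [Nonempty A]
    (hP : ∀ x a, P x a ∈ stdSimplex ℝ X) (hγ0 : 0 ≤ γ) (hγ1 : γ < 1)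
    {p Q Qstar : X → A → ℝ} {δ : ℝ} (hp : ∀ x, p x ∈ stdSimplex ℝ A)
    (hQ : bellman P r γ p Q = Q) (hQstar : bellmanOpt P r γ Qstar = Qstar)
    (hδ : ∀ x, maxValue Qstar x - polApply p Qstar x ≤ δ) (x₀ : X) (a₀ : A) :
    |Q x₀ a₀ - Qstar x₀ a₀| ≤ γ * δ / (1 - γ) := by
  have hδ0 : 0 ≤ δ := (sub_nonneg.2 (polApply_le_maxValue (hp x₀) Qstar)).trans (hδ x₀)
  set N := ‖Q - Qstar‖
  have hnext : ‖polApply p Q - maxValue Qstar‖ ≤ N + δ := by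
    refine (pi_norm_le_iff_of_nonneg (by positivity)).2 fun x => ?_
    have havg := abs_polApply_le_norm (hp x) (Q - Qstar)
    have hx : ‖(Q - Qstar) x‖ ≤ N := norm_le_pi_norm (Q - Qstar) x
    have hgreedy := polApply_le_maxValue (hp x) Qstar
    simp only [polApply_sub, Pi.sub_apply] at havg hx
    rw [Pi.sub_apply, Real.norm_eq_abs, abs_le]
    constructor <;> linarith [abs_le.1 havg, hδ x]
  have hN : N ≤ γ * (N + δ) := norm_le_of_abs_apply_apply_le (by positivity) fun x a => by
    have hdiff : Q x a - Qstar x a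
        = γ * ∑ x', P x a x' * (polApply p Q - maxValue Qstar) x' := by
      calc Q x a - Qstar x a = bellman P r γ p Q x a - bellmanOpt P r γ Qstar x a := by
            rw [hQ, hQstar]
        _ = _ := by
            simp only [bellman_apply, bellmanOpt_apply, Pi.sub_apply, mul_sub, sum_sub_distrib]
            ring
    rw [Pi.sub_apply, Pi.sub_apply, hdiff, abs_mul, abs_of_nonneg hγ0]
    exact mul_le_mul_of_nonneg_left ((abs_sum_mul_le_norm (hP x a) _).trans hnext) hγ0
  calc |Q x₀ a₀ - Qstar x₀ a₀| ≤ N := abs_apply_apply_le_norm (Q - Qstar) x₀ a₀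
    _ ≤ γ * δ / (1 - γ) := by
        rw [le_div_iff₀ (by linarith)]
        linarith

end Bellman

lemma le_max_div_of_le_mul_add {e : ℕ → ℝ} {γ C : ℝ} (hγ0 : 0 ≤ γ) (hγ1 : γ < 1)
    (h : ∀ k, e (k + 1) ≤ γ * e k + C) (k : ℕ) : e k ≤ max (e 0) (C / (1 - γ)) := by
  set M := max (e 0) (C / (1 - γ))
  have hC : C ≤ (1 - γ) * M := (div_le_iff₀' (by linarith)).1 (le_max_right _ _)
  induction k with
  | zero => exact le_max_left _ _
  | succ k ih => nlinarith [h k, mul_le_mul_of_nonneg_left ih hγ0]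

section DPP

variable [Fintype A] {η : ℝ} {Ψ pol : ℕ → X → A → ℝ}

structure IsDPPRun [Fintype X] (P : X → A → X → ℝ) (r : X → A → ℝ) (γ η : ℝ)
    (Ψ pol : ℕ → X → A → ℝ) : Prop where
  pol_eq : ∀ k, pol k = softmaxPol η (Ψ k)
  succ_eq : ∀ k x a, Ψ (k + 1) x a =
    Ψ k x a + bellman P r γ (pol k) (Ψ k) x a - polApply (pol k) (Ψ k) x

noncomputable def cumValue (pol Ψ : ℕ → X → A → ℝ) (k : ℕ) : X → ℝ :=
  fun x => ∑ j ∈ range (k + 1), polApply (pol j) (Ψ j) x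

noncomputable def cumPref (pol Ψ : ℕ → X → A → ℝ) (k : ℕ) : X → A → ℝ :=
  fun x a => Ψ (k + 1) x a + cumValue pol Ψ k x

lemma cumValue_succ (pol Ψ : ℕ → X → A → ℝ) (k : ℕ) :
    cumValue pol Ψ (k + 1) = cumValue pol Ψ k + polApply (pol (k + 1)) (Ψ (k + 1)) := by
  ext x
  simp only [cumValue, sum_range_succ, Pi.add_apply]

section Run

variable [Fintype X] {P : X → A → X → ℝ} {r : X → A → ℝ} {γ : ℝ}

lemma IsDPPRun.pol_succ_eq_softmaxPol_cumPref (h : IsDPPRun P r γ η Ψ pol) (k : ℕ) :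
    pol (k + 1) = softmaxPol η (cumPref pol Ψ k) := by
  rw [h.pol_eq]
  exact (softmaxPol_add_right η (Ψ (k + 1)) (cumValue pol Ψ k)).symm

lemma IsDPPRun.cumPref_eq (h : IsDPPRun P r γ η Ψ pol) (k : ℕ) (x : X) (a : A) :
    cumPref pol Ψ k x a =
      Ψ 0 x a + (k + 1) * r x a + γ * ∑ x', P x a x' * cumValue pol Ψ k x' := by
  induction k generalizing x a with
  | zero =>
    simp only [cumPref, cumValue, zero_add, sum_range_one, h.succ_eq 0, bellman_apply]
    push_cast
    ring
  | succ k ih =>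
    have hstep : cumPref pol Ψ (k + 1) x a = cumPref pol Ψ k x a + r x a
        + γ * ∑ x', P x a x' * polApply (pol (k + 1)) (Ψ (k + 1)) x' := by
      simp only [cumPref, cumValue_succ, Pi.add_apply, h.succ_eq (k + 1), bellman_apply]
      ring
    rw [hstep, ih]
    simp only [cumValue_succ, Pi.add_apply, mul_add, sum_add_distrib]
    push_cast
    ring

variable [Nonempty A]

lemma IsDPPRun.pol_mem_stdSimplex (h : IsDPPRun P r γ η Ψ pol) (k : ℕ) (x : X) :
    pol k x ∈ stdSimplex ℝ A :=
  h.pol_eq k ▸ softmaxPol_mem_stdSimplex η (Ψ k) x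

lemma IsDPPRun.cumValue_succ_eq (h : IsDPPRun P r γ η Ψ pol) (k : ℕ) :
    cumValue pol Ψ (k + 1) = polApply (pol (k + 1)) (cumPref pol Ψ k) := by
  ext x
  have hsum := (h.pol_mem_stdSimplex (k + 1) x).2
  simp only [cumValue_succ, Pi.add_apply, polApply, cumPref, mul_add, sum_add_distrib,
    ← sum_mul, hsum, one_mul, add_comm]

variable {Qstar : X → A → ℝ}

lemma IsDPPRun.norm_cumPref_sub_le (h : IsDPPRun P r γ η Ψ pol)
    (hP : ∀ x a, P x a ∈ stdSimplex ℝ X) (hγ0 : 0 ≤ γ) (hQstar : bellmanOpt P r γ Qstar = Qstar)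
    (k : ℕ) :
    ‖cumPref pol Ψ k - ((k : ℝ) + 1) • Qstar‖ ≤
      ‖Ψ 0‖ + γ * ‖cumValue pol Ψ k - ((k : ℝ) + 1) • maxValue Qstar‖ := by
  refine norm_le_of_abs_apply_apply_le (by positivity) fun x a => ?_
  have hdiff : (cumPref pol Ψ k - ((k : ℝ) + 1) • Qstar) x a = Ψ 0 x a +
      γ * ∑ x', P x a x' * (cumValue pol Ψ k - ((k : ℝ) + 1) • maxValue Qstar) x' := by
    conv_lhs => rw [← hQstar]
    simp only [Pi.sub_apply, Pi.smul_apply, smul_eq_mul, h.cumPref_eq, bellmanOpt_apply, mul_sub,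
      sum_sub_distrib, mul_left_comm _ ((k : ℝ) + 1), ← mul_sum]
    ring
  rw [hdiff]
  calc _ ≤ |Ψ 0 x a| + γ * |∑ x', P x a x' *
          (cumValue pol Ψ k - ((k : ℝ) + 1) • maxValue Qstar) x'| := by
        rw [← abs_of_nonneg hγ0, ← abs_mul, abs_of_nonneg hγ0]
        exact abs_add_le _ _
    _ ≤ _ := add_le_add (abs_apply_apply_le_norm _ x a)
        (mul_le_mul_of_nonneg_left (abs_sum_mul_le_norm (hP x a) _) hγ0)

lemma IsDPPRun.norm_cumValue_succ_sub_le (h : IsDPPRun P r γ η Ψ pol)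
    (hP : ∀ x a, P x a ∈ stdSimplex ℝ X) (hγ0 : 0 ≤ γ) (hη : 0 < η)
    (hQstar : bellmanOpt P r γ Qstar = Qstar) (k : ℕ) :
    ‖cumValue pol Ψ (k + 1) - (((k + 1 : ℕ) : ℝ) + 1) • maxValue Qstar‖ ≤
      γ * ‖cumValue pol Ψ k - ((k : ℝ) + 1) • maxValue Qstar‖ +
        (‖Ψ 0‖ + Fintype.card A / η + ‖maxValue Qstar‖) := by
  set G := cumPref pol Ψ k
  have hG := h.norm_cumPref_sub_le hP hγ0 hQstar k
  refine (pi_norm_le_iff_of_nonneg (by positivity)).2 fun x => ?_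
  have hsoft := maxValue_sub_le_polApply_softmaxPol hη G x
  have hgreedy := polApply_le_maxValue (h.pol_mem_stdSimplex (k + 1) x) G
  have hmax := abs_maxValue_sub_le_norm G (((k : ℝ) + 1) • Qstar) x
  have hGx : ‖(G - ((k : ℝ) + 1) • Qstar) x‖ ≤ _ := norm_le_pi_norm _ x
  have hV := abs_apply_le_norm (maxValue Qstar) x
  rw [← h.pol_succ_eq_softmaxPol_cumPref] at hsoft
  rw [maxValue_smul (by positivity)] at hmax
  simp only [Pi.sub_apply, Pi.smul_apply, smul_eq_mul] at hmax hGx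
  rw [h.cumValue_succ_eq, Pi.sub_apply, Pi.smul_apply, smul_eq_mul, Real.norm_eq_abs, abs_le]
  push_cast
  constructor <;> linarith [abs_le.1 hmax, abs_le.1 hV]

lemma IsDPPRun.mul_maxValue_sub_polApply_le (h : IsDPPRun P r γ η Ψ pol)
    (hP : ∀ x a, P x a ∈ stdSimplex ℝ X) (hγ0 : 0 ≤ γ) (hη : 0 < η)
    (hQstar : bellmanOpt P r γ Qstar = Qstar) (k : ℕ) (x : X) :
    ((k : ℝ) + 1) * (maxValue Qstar x - polApply (pol (k + 1)) Qstar x) ≤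
      Fintype.card A / η +
        2 * (‖Ψ 0‖ + γ * ‖cumValue pol Ψ k - ((k : ℝ) + 1) • maxValue Qstar‖) := by
  have htransfer := maxValue_sub_polApply_le (h.pol_mem_stdSimplex (k + 1) x)
    (cumPref pol Ψ k) (((k : ℝ) + 1) • Qstar)
  have hsoft := maxValue_sub_le_polApply_softmaxPol hη (cumPref pol Ψ k) x
  rw [← h.pol_succ_eq_softmaxPol_cumPref] at hsoft
  rw [maxValue_smul (by positivity), polApply_smul] at htransfer
  simp only [Pi.smul_apply, smul_eq_mul] at htransfer
  linarith [h.norm_cumPref_sub_le hP hγ0 hQstar k]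

lemma IsDPPRun.exists_maxValue_sub_polApply_le_div (h : IsDPPRun P r γ η Ψ pol)
    (hP : ∀ x a, P x a ∈ stdSimplex ℝ X) (hγ0 : 0 ≤ γ) (hγ1 : γ < 1) (hη : 0 < η)
    (hQstar : bellmanOpt P r γ Qstar = Qstar) :
    ∃ C, ∀ (k : ℕ) x, maxValue Qstar x - polApply (pol (k + 1)) Qstar x ≤ C / ((k : ℝ) + 1) := by
  obtain ⟨B, hB⟩ : ∃ B, ∀ k : ℕ, ‖cumValue pol Ψ k - ((k : ℝ) + 1) • maxValue Qstar‖ ≤ B :=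
    ⟨_, le_max_div_of_le_mul_add hγ0 hγ1 (h.norm_cumValue_succ_sub_le hP hγ0 hη hQstar)
      (e := fun k => ‖cumValue pol Ψ k - ((k : ℝ) + 1) • maxValue Qstar‖)⟩
  refine ⟨Fintype.card A / η + 2 * (‖Ψ 0‖ + γ * B), fun k x => ?_⟩
  rw [le_div_iff₀' (by positivity)]
  exact (h.mul_maxValue_sub_polApply_le hP hγ0 hη hQstar k x).trans (by gcongr; exact hB k)

end Run

end DPP

theorem dpp_asymptotic_convergence_general
    {X A : Type*} [Fintype X] [Fintype A] [Nonempty A]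
    (P : X → A → X → ℝ) (hP0 : ∀ x a x', 0 ≤ P x a x') (hP1 : ∀ x a, ∑ x', P x a x' = 1)
    (r : X → A → ℝ)
    (γ : ℝ) (hγ0 : 0 ≤ γ) (hγ1 : γ < 1)
    (η : ℝ) (hη : 0 < η)
    (Ψ : ℕ → X → A → ℝ)
    (pol : ℕ → X → A → ℝ) (hpol : ∀ k, pol k = softmaxPol η (Ψ k))
    (hΨ : ∀ k x a, Ψ (k + 1) x a =
      Ψ k x a + bellman P r γ (pol k) (Ψ k) x a - polApply (pol k) (Ψ k) x)
    (Qstar : X → A → ℝ) (hQstar : bellmanOpt P r γ Qstar = Qstar)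
    (Qpi : ℕ → X → A → ℝ) (hQpi : ∀ k, bellman P r γ (pol k) (Qpi k) = Qpi k) :
    ∀ x a, Filter.Tendsto (fun k => Qpi k x a) Filter.atTop (nhds (Qstar x a)) := by
  have hP : ∀ x a, P x a ∈ stdSimplex ℝ X := fun x a => ⟨hP0 x a, hP1 x a⟩
  have hrun : IsDPPRun P r γ η Ψ pol := ⟨hpol, hΨ⟩
  obtain ⟨C, hC⟩ := hrun.exists_maxValue_sub_polApply_le_div hP hγ0 hγ1 hη hQstar
  intro x a
  have herr : ∀ k : ℕ, ‖Qpi (k + 1) x a - Qstar x a‖ ≤ γ * C / (1 - γ) * (1 / ((k : ℝ) + 1)) :=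
    fun k => by
      have hk := abs_sub_le_of_maxValue_sub_polApply_le hP hγ0 hγ1
        (hrun.pol_mem_stdSimplex (k + 1)) (hQpi (k + 1)) hQstar (hC k) x a
      rw [Real.norm_eq_abs]
      convert hk using 1
      ring
  have hlim := tendsto_one_div_add_atTop_nhds_zero_nat.const_mul (γ * C / (1 - γ))
  rw [mul_zero] at hlim
  rw [← tendsto_add_atTop_iff_nat 1, ← tendsto_sub_nhds_zero_iff]
  exact squeeze_zero_norm herr hlim

/-- Corollary 1 of the paper: the policy induced by exact DPP asymptotically converges
to the optimal policy, i.e. `Q^{π_k} → Q*` pointwise. -/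
theorem dpp_asymptotic_convergence
    {X A : Type*} [Fintype X] [Fintype A] [Nonempty X] [Nonempty A]
    (P : X → A → X → ℝ) (hP0 : ∀ x a x', 0 ≤ P x a x') (hP1 : ∀ x a, ∑ x', P x a x' = 1)
    (r : X → A → ℝ) (Rmax : ℝ) (hR : 0 < Rmax) (hr : ∀ x a, |r x a| ≤ Rmax)
    (γ : ℝ) (hγ0 : 0 ≤ γ) (hγ1 : γ < 1)
    (Vmax : ℝ) (hV : Vmax = Rmax / (1 - γ))
    (η : ℝ) (hη : 0 < η)
    (Ψ : ℕ → X → A → ℝ) (hΨ0 : supNorm (Ψ 0) ≤ Vmax)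
    (pol : ℕ → X → A → ℝ) (hpol : ∀ k, pol k = softmaxPol η (Ψ k))
    (hΨ : ∀ k x a, Ψ (k + 1) x a =
      Ψ k x a + bellman P r γ (pol k) (Ψ k) x a - polApply (pol k) (Ψ k) x)
    (Qstar : X → A → ℝ) (hQstar : bellmanOpt P r γ Qstar = Qstar)
    (Qpi : ℕ → X → A → ℝ) (hQpi : ∀ k, bellman P r γ (pol k) (Qpi k) = Qpi k) :
    ∀ x a, Filter.Tendsto (fun k => Qpi k x a) Filter.atTop (nhds (Qstar x a)) :=
  dpp_asymptotic_convergence_general P hP0 hP1 r γ hγ0 hγ1 η hη Ψ pol hpol hΨ Qstar hQstar Qpi hQpi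
end

section
/- Consider the approximate DPP iteration with parameter η > 0 started from Ψ_0, with error functions ε_k and accumulated errors E_k = Σ_{j=0}^k ε_j, and define the auxiliary action-value functions by Q_0 = Ψ_0 and Q_k = ((k−1)/k) T^{π_{k−1}} Q_{k−1} + (1/k)(T^{π_{k−1}} Q_0 + E_{k−1}) for k ≥ 1, where π_k is the soft-max policy associated with Ψ_k. Then for every integer k ≥ 1 and every state-action pair (x,a): Ψ_k(x,a) = k Q_k(x,a) + Q_0(x,a) − [π_{k−1}((k−1) Q_{k−1} + Q_0)](x). -/
open Finset Real Filter

variable {X A : Type*}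

lemma softmax_sum_one' [Fintype A] [Nonempty A] (η : ℝ) (Ψ : X → A → ℝ) (x : X) :
    ∑ a, softmaxPol η Ψ x a = 1 := by
  simp only [softmaxPol, ← Finset.sum_div]
  rw [div_self]
  positivity

lemma polApply_affine' [Fintype A] (pol f g : X → A → ℝ) (c : X → ℝ) (α : ℝ) (x : X)
    (hsum : ∑ a, pol x a = 1) :
    polApply pol (fun x' a' => α * f x' a' + g x' a' - c x') x
      = α * polApply pol f x + polApply pol g x - c x := by
  simp only [polApply, mul_add, mul_sub, Finset.sum_add_distrib, Finset.sum_sub_distrib,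
    Finset.mul_sum, ← Finset.sum_mul, hsum, one_mul, mul_comm (α : ℝ)]
  rw [Finset.sum_mul]
  simp [mul_assoc]

/-- Lemma 3 of the paper: representation of the approximate DPP action preferences
through the auxiliary action-value functions. -/
theorem approx_dpp_preference_auxiliary_representation
    {X A : Type*} [Fintype X] [Fintype A] [Nonempty X] [Nonempty A]
    (P : X → A → X → ℝ) (hP0 : ∀ x a x', 0 ≤ P x a x') (hP1 : ∀ x a, ∑ x', P x a x' = 1)
    (r : X → A → ℝ) (Rmax : ℝ) (hR : 0 < Rmax) (hr : ∀ x a, |r x a| ≤ Rmax)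
    (γ : ℝ) (hγ0 : 0 ≤ γ) (hγ1 : γ < 1)
    (η : ℝ) (hη : 0 < η)
    (ε : ℕ → X → A → ℝ)
    (E : ℕ → X → A → ℝ)
    (hE : ∀ k x a, E k x a = ∑ j ∈ Finset.range (k + 1), ε j x a)
    (Ψ : ℕ → X → A → ℝ)
    (pol : ℕ → X → A → ℝ) (hpol : ∀ k, pol k = softmaxPol η (Ψ k))
    (hΨ : ∀ k x a, Ψ (k + 1) x a =
      Ψ k x a + bellman P r γ (pol k) (Ψ k) x a - polApply (pol k) (Ψ k) x + ε k x a)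
    (Q : ℕ → X → A → ℝ) (hQ0 : Q 0 = Ψ 0)
    (hQ : ∀ k : ℕ, ∀ x a, Q (k + 1) x a =
      ((k : ℝ) / (k + 1)) * bellman P r γ (pol k) (Q k) x a +
        (1 / ((k : ℝ) + 1)) * (bellman P r γ (pol k) (Q 0) x a + E k x a)) :
    ∀ k : ℕ, ∀ x a, Ψ (k + 1) x a =
      ((k : ℝ) + 1) * Q (k + 1) x a + Q 0 x a -
        polApply (pol k) (fun x' a' => (k : ℝ) * Q k x' a' + Q 0 x' a') x := by
  have hsum : ∀ j x, ∑ a, pol j x a = 1 := fun j x => by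
    rw [hpol]; exact softmax_sum_one' η (Ψ j) x
  have hbell : ∀ (p F : X → A → ℝ) (x : X) (a : A),
      bellman P r γ p F x a = r x a + γ * ∑ x', P x a x' * polApply p F x' := by
    intro p F x a; simp [bellman, polApply, Finset.mul_sum, mul_assoc]
  intro k
  induction k with
  | zero =>
    intro x a
    have h1 : polApply (pol 0) (fun x' a' => (0:ℕ) * Q 0 x' a' + Q 0 x' a') x
        = polApply (pol 0) (Q 0) x := by simp [polApply]
    have h2 : Ψ 0 = Q 0 := hQ0.symm
    rw [hΨ 0 x a]
    rw [hQ 0 x a, hE 0 x a]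
    simp only [Nat.cast_zero, zero_div, zero_mul, zero_add, div_one, one_mul,
      Finset.range_one, Finset.sum_singleton, h2]
    show _ = _ + _ - polApply (pol 0) (Q 0) x
    ring
  | succ k IH =>
    intro x a
    set c : X → ℝ := polApply (pol k) (fun x' a' => (k : ℝ) * Q k x' a' + Q 0 x' a') with hc
    have hΨk1 : ∀ x a, Ψ (k+1) x a = ((k:ℝ)+1) * Q (k+1) x a + Q 0 x a - c x := IH
    have hfun : Ψ (k+1) = fun x' a' => ((k:ℝ)+1) * Q (k+1) x' a' + Q 0 x' a' - c x' := by
      funext x' a'; exact hΨk1 x' a'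
    -- c decomposition
    have hcx' : ∀ x', c x' = (k:ℝ) * polApply (pol k) (Q k) x' + polApply (pol k) (Q 0) x' := by
      intro x'
      have h := polApply_affine' (pol k) (Q k) (Q 0) (fun _ => (0:ℝ)) (k:ℝ) x' (hsum k x')
      simp only [sub_zero] at h
      rw [hc]
      simpa using h
    -- key identity
    have hkey : ((k:ℝ)+1) * Q (k+1) x a
        = ((k:ℝ)+1) * r x a + γ * ∑ x', P x a x' * c x' + E k x a := by
      have hsumc : ∑ x', P x a x' * c x'
          = (k:ℝ) * (∑ x', P x a x' * polApply (pol k) (Q k) x')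
            + ∑ x', P x a x' * polApply (pol k) (Q 0) x' := by
        have h : ∀ x' ∈ Finset.univ, P x a x' * c x'
            = (k:ℝ) * (P x a x' * polApply (pol k) (Q k) x')
              + P x a x' * polApply (pol k) (Q 0) x' := by
          intro x' _; rw [hcx']; ring
        rw [Finset.sum_congr rfl h, Finset.sum_add_distrib, ← Finset.mul_sum]
      have hk1 : ((k:ℝ)+1) ≠ 0 := by positivity
      rw [hQ k x a, hbell, hbell, hsumc]
      field_simp
      ring
    -- polApply of Ψ (k+1)
    have hpaΨ : ∀ x, polApply (pol (k+1)) (Ψ (k+1)) x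
        = ((k:ℝ)+1) * polApply (pol (k+1)) (Q (k+1)) x
          + polApply (pol (k+1)) (Q 0) x - c x := by
      intro x
      rw [hfun]
      exact polApply_affine' (pol (k+1)) (Q (k+1)) (Q 0) c ((k:ℝ)+1) x (hsum (k+1) x)
    -- sum decomposition for bellman of Ψ (k+1)
    have hsum2 : ∑ x', P x a x' * polApply (pol (k+1)) (Ψ (k+1)) x'
        = ((k:ℝ)+1) * (∑ x', P x a x' * polApply (pol (k+1)) (Q (k+1)) x')
          + ∑ x', P x a x' * polApply (pol (k+1)) (Q 0) x'
          - ∑ x', P x a x' * c x' := by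
      have h : ∀ x' ∈ Finset.univ, P x a x' * polApply (pol (k+1)) (Ψ (k+1)) x'
          = ((k:ℝ)+1) * (P x a x' * polApply (pol (k+1)) (Q (k+1)) x')
            + P x a x' * polApply (pol (k+1)) (Q 0) x' - P x a x' * c x' := by
        intro x' _; rw [hpaΨ]; ring
      rw [Finset.sum_congr rfl h, Finset.sum_sub_distrib, Finset.sum_add_distrib,
        ← Finset.mul_sum]
    have hE1 : E (k+1) x a = E k x a + ε (k+1) x a := by
      rw [hE, hE, Finset.sum_range_succ]
    have hQ2 : ((k:ℝ)+1+1) * Q (k+1+1) x a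
        = ((k:ℝ)+1) * (r x a + γ * ∑ x', P x a x' * polApply (pol (k+1)) (Q (k+1)) x')
          + (r x a + γ * ∑ x', P x a x' * polApply (pol (k+1)) (Q 0) x')
          + E (k+1) x a := by
      have hk2 : ((k:ℝ)+1+1) ≠ 0 := by positivity
      rw [hQ (k+1) x a, hbell, hbell]
      push_cast
      field_simp
      ring
    have hpaR : polApply (pol (k+1))
        (fun x' a' => ((k+1 : ℕ) : ℝ) * Q (k+1) x' a' + Q 0 x' a') x
        = ((k:ℝ)+1) * polApply (pol (k+1)) (Q (k+1)) x + polApply (pol (k+1)) (Q 0) x := by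
      have h := polApply_affine' (pol (k+1)) (Q (k+1)) (Q 0) (fun _ => (0:ℝ)) ((k:ℝ)+1) x
        (hsum (k+1) x)
      simp only [sub_zero] at h
      push_cast
      simpa using h
    rw [hΨ (k+1) x a, hbell, hsum2, hpaΨ x, hΨk1 x a, hpaR]
    push_cast
    rw [hQ2, hE1, hkey]
    ring
end
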